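/- Fix n ≥ 0 and assume V_n(t) and V_{n+1}(t) are invertible for all t, with a_n = −V_{n+1} V_n^{-1}. Then for all t ∈ ℝ and all x ∈ ℝ, ∂_t ( P_{n+1}(t,x) + a_n(t) P_n(t,x) ) = ( ∂_t ( ξ_{n+1,n} + a_n ) )(t) · P_n(t,x), i.e. the t-derivative of each coefficient of the polynomial P_{n+1} + a_n P_n equals the corresponding coefficient of (∂_t(ξ_{n+1,n} + a_n)) P_n. -/

import Mathlib

open Matrix

attribute [local instance] Matrix.normedAddCommGroup Matrix.normedSpace

noncomputable section

/-- `M_p`: real `p × p` matrices. -/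
abbrev Mp (p : ℕ) := Matrix (Fin p) (Fin p) ℝ

/-- The block moment matrix `M_n(t) = (m_{i,j}(t))_{0 ≤ i,j ≤ n−1}`, an `np × np` real matrix. -/
def blockM {p : ℕ} (m : ℕ → ℕ → ℝ → Mp p) (n : ℕ) (t : ℝ) :
    Matrix (Fin n × Fin p) (Fin n × Fin p) ℝ :=
  Matrix.of fun a b => m a.1 b.1 t a.2 b.2

/-- The row of moments `(m_{n,0}(t), …, m_{n,n−1}(t))`, a `p × np` matrix. -/
def rowm {p : ℕ} (m : ℕ → ℕ → ℝ → Mp p) (n : ℕ) (t : ℝ) : Matrix (Fin p) (Fin n × Fin p) ℝ :=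
  Matrix.of fun a b => m n b.1 t a b.2

/-- `ξ_{n,i}(t)`, defined by `(ξ_{n,0},…,ξ_{n,n−1}) = −(m_{n,0},…,m_{n,n−1}) M_n⁻¹` pointwise in `t`. -/
def xiD {p : ℕ} (m : ℕ → ℕ → ℝ → Mp p) (n : ℕ) (i : Fin n) (t : ℝ) : Mp p :=
  Matrix.of fun a b => ((-(rowm m n t)) * (blockM m n t)⁻¹) a (i, b)

/-- `H_n(t) = m_{n,n}(t) + Σ_{i=0}^{n−1} ξ_{n,i}(t) m_{i,n}(t)`. -/
def HmatD {p : ℕ} (m : ℕ → ℕ → ℝ → Mp p) (n : ℕ) (t : ℝ) : Mp p :=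
  m n n t + ∑ i : Fin n, xiD m n i t * m i n t

/-- `V_n(t) = φ_n(t) + Σ_{i=0}^{n−1} ξ_{n,i}(t) φ_i(t)`. -/
def VD {p : ℕ} (m : ℕ → ℕ → ℝ → Mp p) (φ : ℕ → ℝ → Mp p) (n : ℕ) (t : ℝ) : Mp p :=
  φ n t + ∑ i : Fin n, xiD m n i t * φ i t

/-- `a_n(t) = −V_{n+1}(t) V_n(t)⁻¹`. -/
def aD {p : ℕ} (m : ℕ → ℕ → ℝ → Mp p) (φ : ℕ → ℝ → Mp p) (n : ℕ) (t : ℝ) : Mp p :=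
  -(VD m φ (n + 1) t * (VD m φ n t)⁻¹)

/-- `P_n(t,x) = x^n I + Σ_{i=0}^{n−1} ξ_{n,i}(t) x^i`. -/
def Ppol {p : ℕ} (m : ℕ → ℕ → ℝ → Mp p) (n : ℕ) (t : ℝ) (x : ℝ) : Mp p :=
  x ^ n • (1 : Mp p) + ∑ i : Fin n, x ^ (i : ℕ) • xiD m n i t

/-!
Differentiating the orthogonality relations `Σᵢ ξ_{N,i} m_{i,j} + m_{N,j} = 0` (`j < N`) with
`∂_t m_{i,j} = φ_i φ_j` gives `Σᵢ ξ'_{N,i} m_{i,j} = -V_N φ_j`. Since `a_n V_n = -V_{n+1}`, the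
matrices `E_k = ξ'_{n+1,k} + a_n ξ'_{n,k} - ξ'_{n+1,n} ξ_{n,k}` (`k < n`) then satisfy
`Σ_k E_k m_{k,j} = 0` for `j < n`, so they vanish because `M_n` is invertible; this is the
coefficientwise form of the claim.

The `φ_i` need not be differentiable, but the products `V_N φ_j = φ_N φ_j + Σᵢ ξ_{N,i} φ_i φ_j`
are. The block row `R = (V_n φ_0, …, V_n φ_n)` has full row rank (the symmetry of the moments
enters here, through `φ_i φ_j = (φ_j φ_i)ᵀ`), so `a_n R = -(V_{n+1} φ_0, …, V_{n+1} φ_n) =: B`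
gives the differentiable expression `a_n = B Rᵀ (R Rᵀ)⁻¹`.
-/

section MatrixCalculus

variable {ι κ μ : Type*} [Fintype κ] {f : ℝ → Matrix ι κ ℝ} {t : ℝ}

theorem hasDerivAt_matrix_iff {A : Matrix ι κ ℝ} :
    HasDerivAt f A t ↔ ∀ i j, HasDerivAt (fun s => f s i j) (A i j) t :=
  ⟨fun h i => hasDerivAt_pi.1 (hasDerivAt_pi.1 h i),
    fun h => hasDerivAt_pi.2 fun i => hasDerivAt_pi.2 (h i)⟩

theorem differentiableAt_matrix_iff :
    DifferentiableAt ℝ f t ↔ ∀ i j, DifferentiableAt ℝ (fun s => f s i j) t :=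
  ⟨fun h i => differentiableAt_pi.1 (differentiableAt_pi.1 h i),
    fun h => differentiableAt_pi.2 fun i => differentiableAt_pi.2 (h i)⟩

theorem HasDerivAt.matrix_mul [Fintype ι] [Fintype μ] {g : ℝ → Matrix κ μ ℝ}
    {A : Matrix ι κ ℝ} {B : Matrix κ μ ℝ} (hf : HasDerivAt f A t) (hg : HasDerivAt g B t) :
    HasDerivAt (fun s => f s * g s) (A * g t + f t * B) t := by
  rw [hasDerivAt_matrix_iff] at hf hg ⊢
  intro i j
  simpa only [mul_apply, Matrix.add_apply, ← Finset.sum_add_distrib] using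
    HasDerivAt.fun_sum fun k _ => (hf i k).fun_mul (hg k j)

theorem HasDerivAt.matrix_transpose [Fintype ι] {A : Matrix ι κ ℝ} (hf : HasDerivAt f A t) :
    HasDerivAt (fun s => (f s)ᵀ) Aᵀ t :=
  hasDerivAt_matrix_iff.2 fun i j => hasDerivAt_matrix_iff.1 hf j i

theorem DifferentiableAt.matrix_mul [Fintype ι] [Fintype μ] {g : ℝ → Matrix κ μ ℝ}
    (hf : DifferentiableAt ℝ f t) (hg : DifferentiableAt ℝ g t) :
    DifferentiableAt ℝ (fun s => f s * g s) t :=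
  (hf.hasDerivAt.matrix_mul hg.hasDerivAt).differentiableAt

theorem DifferentiableAt.matrix_transpose [Fintype ι] (hf : DifferentiableAt ℝ f t) :
    DifferentiableAt ℝ (fun s => (f s)ᵀ) t :=
  hf.hasDerivAt.matrix_transpose.differentiableAt

variable [Fintype ι] [DecidableEq ι] {F : ℝ → Matrix ι ι ℝ}

theorem DifferentiableAt.matrix_det (hF : DifferentiableAt ℝ F t) :
    DifferentiableAt ℝ (fun s => (F s).det) t := by
  have hentry := differentiableAt_matrix_iff.1 hF
  simp only [det_apply']
  exact .fun_sum fun σ _ =>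
    (DifferentiableAt.fun_finsetProd fun i _ => hentry (σ i) i).const_mul _

theorem DifferentiableAt.matrix_adjugate (hF : DifferentiableAt ℝ F t) :
    DifferentiableAt ℝ (fun s => (F s).adjugate) t := by
  refine differentiableAt_matrix_iff.2 fun i j => ?_
  simp only [adjugate_apply]
  refine DifferentiableAt.matrix_det (differentiableAt_matrix_iff.2 fun a b => ?_)
  simp only [updateRow_apply]
  split_ifs
  · exact differentiableAt_const _
  · exact differentiableAt_matrix_iff.1 hF a b

theorem DifferentiableAt.matrix_inv (hF : DifferentiableAt ℝ F t) (ht : IsUnit (F t)) :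
    DifferentiableAt ℝ (fun s => (F s)⁻¹) t := by
  have hdet : (F t).det ≠ 0 := ((isUnit_iff_isUnit_det _).1 ht).ne_zero
  simp only [inv_def, Ring.inverse_eq_inv']
  exact (hF.matrix_det.inv hdet).fun_smul hF.matrix_adjugate

end MatrixCalculus

theorem differentiableAt_of_forall_mul_eq {ι κ : Type*} [Fintype ι] [Fintype κ] [DecidableEq ι]
    {A : ℝ → Matrix ι ι ℝ} {R B : ℝ → Matrix ι κ ℝ} {t : ℝ}
    (hAR : ∀ s, A s * R s = B s) (hR : ∀ s, Function.Injective fun v => v ᵥ* R s)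
    (hRd : DifferentiableAt ℝ R t) (hBd : DifferentiableAt ℝ B t) : DifferentiableAt ℝ A t := by
  have hunit : ∀ s, IsUnit (R s * (R s)ᵀ) := fun s => by
    simpa only [conjTranspose_eq_transpose_of_trivial] using
      (PosDef.mul_conjTranspose_self (R s) (hR s)).isUnit
  have hA : A = fun s => B s * (R s)ᵀ * (R s * (R s)ᵀ)⁻¹ := funext fun s => by
    rw [← hAR, Matrix.mul_assoc (A s),
      mul_nonsing_inv_cancel_right _ _ ((isUnit_iff_isUnit_det _).1 (hunit s))]
  rw [hA]
  exact (hBd.matrix_mul hRd.matrix_transpose).matrix_mul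
    ((hRd.matrix_mul hRd.matrix_transpose).matrix_inv (hunit t))

def blockRow {J ι κ R : Type*} (G : J → Matrix ι κ R) : Matrix ι (J × κ) R :=
  of fun a b => G b.1 a b.2

section BlockRow

variable {J ι κ R : Type*}

theorem blockRow_injective : Function.Injective (blockRow : (J → Matrix ι κ R) → _) :=
  fun _ _ h => funext fun j => funext fun a => funext fun c => congrFun (congrFun h a) (j, c)

theorem blockRow_zero [Zero R] : blockRow (0 : J → Matrix ι κ R) = 0 := rfl

theorem mul_blockRow [Fintype ι] [NonUnitalNonAssocSemiring R] {μ : Type*}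
    (A : Matrix μ ι R) (G : J → Matrix ι κ R) :
    A * blockRow G = blockRow fun j => A * G j := rfl

theorem vecMul_blockRow_eq_zero_iff [Fintype ι] [NonUnitalNonAssocSemiring R] {v : ι → R}
    {G : J → Matrix ι κ R} : v ᵥ* blockRow G = 0 ↔ ∀ j, v ᵥ* G j = 0 := by
  refine ⟨fun h j => funext fun c => congrFun h (j, c), fun h => funext fun b => ?_⟩
  exact congrFun (h b.1) b.2

theorem DifferentiableAt.blockRow [Fintype J] [Fintype ι] [Fintype κ] {G : J → ℝ → Matrix ι κ ℝ}
    {t : ℝ} (hG : ∀ j, DifferentiableAt ℝ (G j) t) :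
    DifferentiableAt ℝ (fun s => _root_.blockRow fun j => G j s) t :=
  differentiableAt_matrix_iff.2 fun a b => differentiableAt_matrix_iff.1 (hG b.1) a b.2

end BlockRow

theorem sum_pow_smul_add_mul_eq {A : Type*} [Ring A] [Algebra ℝ A] {n : ℕ} (x : ℝ)
    (D : Fin (n + 1) → A) (D₀ ξ : Fin n → A) (a a' : A)
    (h : ∀ k, D k.castSucc + a * D₀ k = D (Fin.last n) * ξ k) :
    (∑ i : Fin (n + 1), x ^ (i : ℕ) • D i)
        + (a' * (x ^ n • 1 + ∑ i : Fin n, x ^ (i : ℕ) • ξ i) + a * ∑ i : Fin n, x ^ (i : ℕ) • D₀ i)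
      = (D (Fin.last n) + a') * (x ^ n • 1 + ∑ i : Fin n, x ^ (i : ℕ) • ξ i) := by
  simp only [Fin.sum_univ_castSucc, Fin.val_castSucc, Fin.val_last, add_mul, mul_add,
    Finset.mul_sum, mul_smul_comm, mul_one, ← h, smul_add, Finset.sum_add_distrib]
  abel

section Moments

variable {p : ℕ} {m : ℕ → ℕ → ℝ → Mp p} {φ : ℕ → ℝ → Mp p} {N n : ℕ} {t : ℝ}

theorem blockRow_mul_blockM (E : Fin N → Mp p) :
    blockRow E * blockM m N t = blockRow fun j : Fin N => ∑ i, E i * m i j t := by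
  ext a ⟨j, b⟩
  simp only [mul_apply, Fintype.sum_prod_type, blockRow, blockM, of_apply, Matrix.sum_apply]

theorem blockRow_xiD : blockRow (fun i => xiD m N i t) = -rowm m N t * (blockM m N t)⁻¹ := rfl

theorem sum_xiD_mul_moment (hM : IsUnit (blockM m N t)) (j : Fin N) :
    ∑ i, xiD m N i t * m i j t = -m N j t := by
  have h : blockRow (fun i => xiD m N i t) * blockM m N t
      = blockRow fun j : Fin N => -m N j t := by
    rw [blockRow_xiD, nonsing_inv_mul_cancel_right _ _ ((isUnit_iff_isUnit_det _).1 hM)]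
    rfl
  rw [blockRow_mul_blockM] at h
  exact congrFun (blockRow_injective h) j

theorem eq_zero_of_sum_mul_moment_eq_zero (hM : IsUnit (blockM m N t)) {E : Fin N → Mp p}
    (hE : ∀ j : Fin N, ∑ i, E i * m i j t = 0) : E = 0 := by
  have h : blockRow E * blockM m N t = blockRow 0 := by
    rw [blockRow_mul_blockM]
    exact congrArg blockRow (funext hE)
  apply blockRow_injective
  rw [← mul_nonsing_inv_cancel_right _ (blockRow E) ((isUnit_iff_isUnit_det _).1 hM), h,
    blockRow_zero, Matrix.zero_mul]

theorem differentiableAt_xiD (hm : ∀ i j, DifferentiableAt ℝ (m i j) t)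
    (hM : IsUnit (blockM m N t)) (i : Fin N) : DifferentiableAt ℝ (xiD m N i) t := by
  have hrow : DifferentiableAt ℝ (fun s => -rowm m N s) t :=
    (DifferentiableAt.blockRow fun j : Fin N => hm N j).neg
  have hblock : DifferentiableAt ℝ (blockM m N) t := differentiableAt_matrix_iff.2 fun a b =>
    differentiableAt_matrix_iff.1 (hm a.1 b.1) a.2 b.2
  have hrow_mul_inv := differentiableAt_matrix_iff.1 (hrow.matrix_mul (hblock.matrix_inv hM))
  exact differentiableAt_matrix_iff.2 fun a b => hrow_mul_inv a (i, b)

theorem sum_deriv_xiD_mul_moment (hm : ∀ i j s, HasDerivAt (m i j) (φ i s * φ j s) s)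
    (hM : ∀ s, IsUnit (blockM m N s)) (j : Fin N) :
    ∑ i, deriv (xiD m N i) t * m i j t = -(VD m φ N t * φ j t) := by
  have hξ i := (differentiableAt_xiD (fun i j => (hm i j t).differentiableAt) (hM t) i).hasDerivAt
  have hderiv : HasDerivAt (fun s => ∑ i, xiD m N i s * m i j s + m N j s)
      (∑ i, (deriv (xiD m N i) t * m i j t + xiD m N i t * (φ i t * φ j t)) + φ N t * φ j t) t :=
    (HasDerivAt.fun_sum fun i _ => (hξ i).matrix_mul (hm i j t)).add (hm N j t)
  have hconst : (fun s => ∑ i, xiD m N i s * m i j s + m N j s) = fun _ => 0 :=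
    funext fun s => by rw [sum_xiD_mul_moment (hM s), neg_add_cancel]
  have h := hderiv.unique (hconst ▸ hasDerivAt_const t 0)
  rw [Finset.sum_add_distrib] at h
  rw [VD, add_mul, Finset.sum_mul, eq_neg_iff_add_eq_zero, ← h]
  simp only [mul_assoc]
  abel

theorem aD_mul_VD (hV : IsUnit (VD m φ n t)) : aD m φ n t * VD m φ n t = -VD m φ (n + 1) t := by
  rw [aD, neg_mul, nonsing_inv_mul_cancel_right _ _ ((isUnit_iff_isUnit_det _).1 hV)]

theorem deriv_xiD_castSucc_add_aD_mul_deriv_xiD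
    (hm : ∀ i j s, HasDerivAt (m i j) (φ i s * φ j s) s) (hM : ∀ N s, IsUnit (blockM m N s))
    (hV : IsUnit (VD m φ n t)) (k : Fin n) :
    deriv (xiD m (n + 1) k.castSucc) t + aD m φ n t * deriv (xiD m n k) t =
      deriv (xiD m (n + 1) (Fin.last n)) t * xiD m n k t := by
  rw [← sub_eq_zero]
  refine congrFun (eq_zero_of_sum_mul_moment_eq_zero (hM n t)
    (E := fun k => deriv (xiD m (n + 1) k.castSucc) t + aD m φ n t * deriv (xiD m n k) t
      - deriv (xiD m (n + 1) (Fin.last n)) t * xiD m n k t) fun j => ?_) k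
  have hsucc := sum_deriv_xiD_mul_moment hm (hM (n + 1)) (t := t) j.castSucc
  rw [Fin.sum_univ_castSucc] at hsucc
  simp only [Fin.val_castSucc, Fin.val_last] at hsucc
  have hcur := sum_deriv_xiD_mul_moment hm (hM n) (t := t) j
  have horth := sum_xiD_mul_moment (hM n t) j
  simp only [sub_mul, add_mul, Finset.sum_sub_distrib, Finset.sum_add_distrib, mul_assoc,
    ← Finset.mul_sum, hcur, horth]
  rw [mul_neg, ← Matrix.mul_assoc, aD_mul_VD hV, neg_mul, ← hsucc, mul_neg]
  abel

theorem phi_mul_phi_eq_transpose (hsym : ∀ i j t, m i j t = (m j i t)ᵀ)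
    (hm : ∀ i j s, HasDerivAt (m i j) (φ i s * φ j s) s) (i j : ℕ) :
    φ i t * φ j t = (φ j t * φ i t)ᵀ := by
  have h : m i j = fun s => (m j i s)ᵀ := funext (hsym i j)
  refine (hm i j t).unique ?_
  rw [h]
  exact (hm j i t).matrix_transpose

theorem eq_zero_of_forall_phi_mulVec_eq_zero (hV : IsUnit (VD m φ n t)) {z : Fin p → ℝ}
    (hz : ∀ j : Fin (n + 1), φ j t *ᵥ z = 0) : z = 0 := by
  have hlast : φ n t *ᵥ z = 0 := hz (Fin.last n)
  have hlow : ∀ i : Fin n, φ i t *ᵥ z = 0 := fun i => hz i.castSucc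
  refine mulVec_injective_iff_isUnit.2 hV ?_
  simp [VD, add_mulVec, sum_mulVec, ← mulVec_mulVec, hlast, hlow]

theorem eq_zero_of_forall_vecMul_phi_eq_zero (hsym : ∀ i j t, m i j t = (m j i t)ᵀ)
    (hm : ∀ i j s, HasDerivAt (m i j) (φ i s * φ j s) s) (hV : IsUnit (VD m φ n t))
    {w : Fin p → ℝ} (hw : ∀ j : Fin (n + 1), w ᵥ* φ j t = 0) : w = 0 :=
  eq_zero_of_forall_phi_mulVec_eq_zero hV fun j =>
    eq_zero_of_forall_phi_mulVec_eq_zero hV fun i => by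
      rw [mulVec_mulVec, phi_mul_phi_eq_transpose hsym hm, mulVec_transpose, ← vecMul_vecMul,
        hw j, zero_vecMul]

theorem injective_vecMul_blockRow_VD_mul_phi (hsym : ∀ i j t, m i j t = (m j i t)ᵀ)
    (hm : ∀ i j s, HasDerivAt (m i j) (φ i s * φ j s) s) (hV : IsUnit (VD m φ n t)) :
    Function.Injective fun v => v ᵥ* blockRow fun j : Fin (n + 1) => VD m φ n t * φ j t := by
  intro v w hvw
  have hdiff : (v - w) ᵥ* blockRow (fun j : Fin (n + 1) => VD m φ n t * φ j t) = 0 := by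
    rw [sub_vecMul]
    exact sub_eq_zero.2 hvw
  rw [← sub_eq_zero]
  refine vecMul_injective_iff_isUnit.2 hV ?_
  change (v - w) ᵥ* VD m φ n t = 0 ᵥ* VD m φ n t
  rw [zero_vecMul]
  refine eq_zero_of_forall_vecMul_phi_eq_zero hsym hm hV fun j => ?_
  rw [vecMul_vecMul]
  exact vecMul_blockRow_eq_zero_iff.1 hdiff j

theorem differentiableAt_VD_mul_phi (hm : ∀ i j, DifferentiableAt ℝ (m i j) t)
    (hφφ : ∀ i j, DifferentiableAt ℝ (fun s => φ i s * φ j s) t) (hM : IsUnit (blockM m N t))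
    (j : ℕ) : DifferentiableAt ℝ (fun s => VD m φ N s * φ j s) t := by
  have h : (fun s => VD m φ N s * φ j s)
      = fun s => φ N s * φ j s + ∑ i : Fin N, xiD m N i s * (φ i s * φ j s) :=
    funext fun s => by simp only [VD, add_mul, Finset.sum_mul, mul_assoc]
  rw [h]
  exact (hφφ N j).add (.fun_sum fun i _ => (differentiableAt_xiD hm hM i).matrix_mul (hφφ i j))

theorem differentiableAt_aD (hsym : ∀ i j t, m i j t = (m j i t)ᵀ)
    (hm : ∀ i j s, HasDerivAt (m i j) (φ i s * φ j s) s)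
    (hφφ : ∀ i j, DifferentiableAt ℝ (fun s => φ i s * φ j s) t)
    (hM : ∀ N, IsUnit (blockM m N t)) (hV : ∀ s, IsUnit (VD m φ n s)) :
    DifferentiableAt ℝ (aD m φ n) t := by
  have hmt i j := (hm i j t).differentiableAt
  refine differentiableAt_of_forall_mul_eq
    (R := fun s => blockRow fun j : Fin (n + 1) => VD m φ n s * φ j s)
    (B := fun s => blockRow fun j : Fin (n + 1) => -(VD m φ (n + 1) s * φ j s)) (fun s => ?_)
    (fun s => injective_vecMul_blockRow_VD_mul_phi hsym hm (hV s))
    (.blockRow fun j => differentiableAt_VD_mul_phi hmt hφφ (hM n) j)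
    (.blockRow fun j => (differentiableAt_VD_mul_phi hmt hφφ (hM (n + 1)) j).neg)
  simp only [mul_blockRow, ← Matrix.mul_assoc, aD_mul_VD (hV s), neg_mul]

theorem hasDerivAt_Ppol {x : ℝ} (hξ : ∀ i, DifferentiableAt ℝ (xiD m N i) t) :
    HasDerivAt (fun s => Ppol m N s x) (∑ i : Fin N, x ^ (i : ℕ) • deriv (xiD m N i) t) t := by
  have h := (hasDerivAt_const t (x ^ N • (1 : Mp p))).fun_add
    (HasDerivAt.fun_sum (u := .univ) fun i _ => (hξ i).hasDerivAt.const_smul (x ^ (i : ℕ)))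
  rw [zero_add] at h
  exact h

end Moments

theorem stmt13_general {p : ℕ} (m : ℕ → ℕ → ℝ → Mp p) (φ : ℕ → ℝ → Mp p)
    (hsym : ∀ i j t, m i j t = (m j i t)ᵀ)
    (hderiv : ∀ i j t, HasDerivAt (m i j) (m (i + 1) j t + m i (j + 1) t) t)
    (hphi : ∀ i j t, m (i + 1) j t + m i (j + 1) t = φ i t * φ j t)
    (hM : ∀ n t, IsUnit (blockM m n t))
    (n : ℕ)
    (hV1 : ∀ t, IsUnit (VD m φ n t)) :
    ∀ (t x : ℝ),
      HasDerivAt (fun s => Ppol m (n + 1) s x + aD m φ n s * Ppol m n s x)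
        (deriv (fun s => xiD m (n + 1) ⟨n, Nat.lt_succ_self n⟩ s + aD m φ n s) t
          * Ppol m n t x) t := by
  intro t x
  have hm : ∀ i j s, HasDerivAt (m i j) (φ i s * φ j s) s := fun i j s => hphi i j s ▸ hderiv i j s
  have hφφ : ∀ i j, DifferentiableAt ℝ (fun s => φ i s * φ j s) t := fun i j => by
    simp only [← hphi]
    exact (hderiv _ _ t).differentiableAt.add (hderiv _ _ t).differentiableAt
  have hξ N := differentiableAt_xiD (fun i j => (hm i j t).differentiableAt) (hM N t)
  have ha := (differentiableAt_aD hsym hm hφφ (fun N => hM N t) hV1).hasDerivAt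
  have hlead : deriv (fun s => xiD m (n + 1) ⟨n, Nat.lt_succ_self n⟩ s + aD m φ n s) t
      = deriv (xiD m (n + 1) (Fin.last n)) t + deriv (aD m φ n) t :=
    ((hξ _ _).hasDerivAt.add ha).deriv
  refine ((hasDerivAt_Ppol (hξ (n + 1))).fun_add
    (ha.matrix_mul (hasDerivAt_Ppol (hξ n)))).congr_deriv ?_
  rw [hlead]
  exact sum_pow_smul_add_mul_eq x _ _ _ _ _
    (deriv_xiD_castSucc_add_aD_mul_deriv_xiD hm hM (hV1 t))

/-- Fix `n ≥ 0` and assume `V_n(t)` and `V_{n+1}(t)` are invertible for all `t`, with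
`a_n = −V_{n+1} V_n⁻¹`.  Then for all `t ∈ ℝ` and all `x ∈ ℝ`,
`∂_t (P_{n+1}(t,x) + a_n(t) P_n(t,x)) = (∂_t (ξ_{n+1,n} + a_n))(t) · P_n(t,x)`. -/
theorem stmt13 {p : ℕ} (hp : 1 ≤ p) (m : ℕ → ℕ → ℝ → Mp p) (φ : ℕ → ℝ → Mp p)
    (hsym : ∀ i j t, m i j t = (m j i t)ᵀ)
    (hderiv : ∀ i j t, HasDerivAt (m i j) (m (i + 1) j t + m i (j + 1) t) t)
    (hphi : ∀ i j t, m (i + 1) j t + m i (j + 1) t = φ i t * φ j t)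
    (hM : ∀ n t, IsUnit (blockM m n t))
    (n : ℕ)
    (hV1 : ∀ t, IsUnit (VD m φ n t)) (hV2 : ∀ t, IsUnit (VD m φ (n + 1) t)) :
    ∀ (t x : ℝ),
      HasDerivAt (fun s => Ppol m (n + 1) s x + aD m φ n s * Ppol m n s x)
        (deriv (fun s => xiD m (n + 1) ⟨n, Nat.lt_succ_self n⟩ s + aD m φ n s) t
          * Ppol m n t x) t :=
  stmt13_general m φ hsym hderiv hphi hM n hV1
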